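/- arXiv:1901.04343 — 2 statements merged into one kernel-verified Lean document; each statement's English description precedes it below -/
import Mathlib

section
/- Let r₀ > 0, and suppose f : (r₀, ∞) → ℝ is a C² function with f'(x) > 0 for all x > r₀, satisfying f''(x) = (1 + f'(x)²)(2H(ν_f(x))·√(1 + f'(x)²) − f'(x)/x), where ν_f(x) = 1/√(1 + f'(x)²) and H : [−1,1] → ℝ satisfies H(y) < 0 for y ∈ (−1,1). Then the function x ↦ x·f'(x) is strictly decreasing on (r₀, ∞). -/
/-! With `p = f'`, the ODE gives `(x p)' = p + x p' = 2 x (1 + p²)^{3/2} H(ν) - p³`. Since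
`ν = 1 / √(1 + p²)` lies in `(-1, 1)`, where `H < 0`, the first term is negative, and `p³ > 0`. -/

open Real Set

lemma one_div_sqrt_one_add_sq_mem_Ioo {t : ℝ} (ht : t ≠ 0) : 1 / √(1 + t ^ 2) ∈ Ioo (-1 : ℝ) 1 := by
  have hsqrt : 1 < √(1 + t ^ 2) := by
    rw [lt_sqrt zero_le_one]
    linarith [sq_pos_of_ne_zero ht]
  constructor
  · linarith [one_div_pos.mpr (zero_lt_one.trans hsqrt)]
  · exact (div_lt_one (zero_lt_one.trans hsqrt)).mpr hsqrt

lemma add_mul_meanCurvature_eq {x : ℝ} (hx : x ≠ 0) (p h : ℝ) :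
    p + x * ((1 + p ^ 2) * (2 * h * √(1 + p ^ 2) - p / x)) =
      2 * h * x * (1 + p ^ 2) * √(1 + p ^ 2) - p ^ 3 := by
  field_simp
  ring

lemma add_mul_meanCurvature_neg {x p h : ℝ} (hx : 0 < x) (hp : 0 ≤ p) (hh : h < 0) :
    p + x * ((1 + p ^ 2) * (2 * h * √(1 + p ^ 2) - p / x)) < 0 := by
  rw [add_mul_meanCurvature_eq hx.ne']
  have hcurv : 2 * h * x * (1 + p ^ 2) * √(1 + p ^ 2) < 0 := by
    have : 0 < x * (1 + p ^ 2) * √(1 + p ^ 2) := by positivity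
    nlinarith
  linarith [pow_nonneg hp 3]

theorem stmt_2_general (r₀ : ℝ) (hr₀ : 0 < r₀) (H : ℝ → ℝ)
    (hH : ∀ y ∈ Set.Ioo (-1:ℝ) 1, H y < 0)
    (f' f'' : ℝ → ℝ)
    (hderiv2 : ∀ x ∈ Set.Ioi r₀, HasDerivAt f' (f'' x) x)
    (hpos : ∀ x ∈ Set.Ioi r₀, 0 < f' x)
    (hODE : ∀ x ∈ Set.Ioi r₀,
      f'' x = (1 + f' x ^ 2) *
        (2 * H (1 / Real.sqrt (1 + f' x ^ 2)) * Real.sqrt (1 + f' x ^ 2) - f' x / x)) :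
    StrictAntiOn (fun x => x * f' x) (Set.Ioi r₀) := by
  have hg : ∀ x ∈ Ioi r₀, HasDerivAt (fun x => x * f' x) (f' x + x * f'' x) x := fun x hx =>
    ((hasDerivAt_id' x).mul (hderiv2 x hx)).congr_deriv (by ring)
  refine strictAntiOn_of_hasDerivWithinAt_neg (f' := fun x => f' x + x * f'' x) (convex_Ioi r₀)
    (fun x hx => (hg x hx).continuousAt.continuousWithinAt) (fun x hx => ?_) (fun x hx => ?_)
  · rw [interior_Ioi] at hx ⊢
    exact (hg x hx).hasDerivWithinAt
  · rw [interior_Ioi] at hx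
    rw [hODE x hx]
    exact add_mul_meanCurvature_neg (hr₀.trans hx) (hpos x hx).le
      (hH _ (one_div_sqrt_one_add_sq_mem_Ioo (hpos x hx).ne'))

theorem stmt_2 (r₀ : ℝ) (hr₀ : 0 < r₀) (H : ℝ → ℝ)
    (hH : ∀ y ∈ Set.Ioo (-1:ℝ) 1, H y < 0)
    (f f' f'' : ℝ → ℝ)
    (hderiv : ∀ x ∈ Set.Ioi r₀, HasDerivAt f (f' x) x)
    (hderiv2 : ∀ x ∈ Set.Ioi r₀, HasDerivAt f' (f'' x) x)
    (hcont : ContinuousOn f'' (Set.Ioi r₀))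
    (hpos : ∀ x ∈ Set.Ioi r₀, 0 < f' x)
    (hODE : ∀ x ∈ Set.Ioi r₀,
      f'' x = (1 + f' x ^ 2) *
        (2 * H (1 / Real.sqrt (1 + f' x ^ 2)) * Real.sqrt (1 + f' x ^ 2) - f' x / x)) :
    StrictAntiOn (fun x => x * f' x) (Set.Ioi r₀) :=
  stmt_2_general r₀ hr₀ H hH f' f'' hderiv2 hpos hODE
end

section
/- Let r₀ > 0 and α > 1, and suppose f : (r₀, ∞) → ℝ is C² with f'(x) > 0, f'(x) < r₀/√(x² − r₀²) for all x > r₀, and suppose there exist positive constants A, B such that A·exp(−∫_{x₀}^x f'(t)^{2α−1} dt) ≤ x·f'(x)/√(1+f'(x)²) ≤ B for all x > x₀ > r₀. Then x·f'(x) is bounded between two positive constants on (x₁, ∞) for some x₁ > x₀. -/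
theorem stmt_16 (r₀ α x₀ A B : ℝ) (hr₀ : 0 < r₀) (hα : 1 < α) (hx₀ : r₀ < x₀)
    (hA : 0 < A) (hB : 0 < B)
    (f f' f'' : ℝ → ℝ)
    (hderiv : ∀ x ∈ Set.Ioi r₀, HasDerivAt f (f' x) x)
    (hderiv2 : ∀ x ∈ Set.Ioi r₀, HasDerivAt f' (f'' x) x)
    (hpos : ∀ x ∈ Set.Ioi r₀, 0 < f' x)
    (hlt : ∀ x ∈ Set.Ioi r₀, f' x < r₀ / Real.sqrt (x ^ 2 - r₀ ^ 2))
    (hbd : ∀ x, x₀ < x →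
      A * Real.exp (-∫ t in x₀..x, f' t ^ (2 * α - 1))
          ≤ x * f' x / Real.sqrt (1 + f' x ^ 2) ∧
        x * f' x / Real.sqrt (1 + f' x ^ 2) ≤ B) :
    ∃ x₁, x₀ < x₁ ∧ ∃ m M : ℝ, 0 < m ∧
      ∀ x, x₁ < x → m ≤ x * f' x ∧ x * f' x ≤ M := by
  set p : ℝ := 2 * α - 1 with hp_def
  have hp : 1 < p := by simp only [hp_def]; linarith
  have hp0 : 0 ≤ p := by linarith
  -- continuity of f' on Ioi r₀
  have hcont : ContinuousOn f' (Set.Ioi r₀) := fun x hx =>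
    ((hderiv2 x hx).continuousAt).continuousWithinAt
  -- positivity facts
  have hx₀pos : 0 < x₀ := lt_trans hr₀ hx₀
  have hden₀ : 0 < Real.sqrt (x₀ ^ 2 - r₀ ^ 2) := by
    apply Real.sqrt_pos.mpr
    nlinarith
  set c₀ : ℝ := r₀ / Real.sqrt (x₀ ^ 2 - r₀ ^ 2) with hc₀_def
  have hc₀pos : 0 < c₀ := div_pos hr₀ hden₀
  -- bound f' t ≤ c₀ for t ≥ x₀
  have hf'le : ∀ t, x₀ ≤ t → f' t ≤ c₀ := by
    intro t ht
    have htr : r₀ < t := lt_of_lt_of_le hx₀ ht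
    have h1 : f' t < r₀ / Real.sqrt (t ^ 2 - r₀ ^ 2) := hlt t htr
    have h2 : Real.sqrt (x₀ ^ 2 - r₀ ^ 2) ≤ Real.sqrt (t ^ 2 - r₀ ^ 2) := by
      apply Real.sqrt_le_sqrt; nlinarith
    have := div_le_div_of_nonneg_left hr₀.le hden₀ h2
    linarith
  set x₁ : ℝ := max x₀ (2 * r₀) + 1 with hx₁_def
  have hx₁gt : x₀ < x₁ := lt_of_le_of_lt (le_max_left _ _) (by linarith [lt_add_one (max x₀ (2*r₀))])
  have hx₁r : 2 * r₀ < x₁ := lt_of_le_of_lt (le_max_right _ _) (lt_add_one _)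
  have hx₁pos : 0 < x₁ := by linarith
  -- bound f' t ≤ 2 r₀ / t for t ≥ x₁
  have hf'le2 : ∀ t, x₁ ≤ t → f' t ≤ 2 * r₀ / t := by
    intro t ht
    have htr : r₀ < t := by linarith
    have htpos : 0 < t := by linarith
    have h1 : f' t < r₀ / Real.sqrt (t ^ 2 - r₀ ^ 2) := hlt t htr
    have h2 : t / 2 ≤ Real.sqrt (t ^ 2 - r₀ ^ 2) := by
      rw [show t / 2 = Real.sqrt ((t/2)^2) by rw [Real.sqrt_sq (by positivity)]]
      apply Real.sqrt_le_sqrt; nlinarith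
    have h3 : r₀ / Real.sqrt (t ^ 2 - r₀ ^ 2) ≤ r₀ / (t / 2) := by
      apply div_le_div_of_nonneg_left hr₀.le (by positivity) h2
    have : r₀ / (t / 2) = 2 * r₀ / t := by field_simp
    linarith [h3, this ▸ h3]
  -- integrability of f'^p on subintervals of [x₀, ∞)
  have hinteg : ∀ a b : ℝ, x₀ ≤ a → a ≤ b →
      IntervalIntegrable (fun t => f' t ^ p) MeasureTheory.volume a b := by
    intro a b ha hab
    apply ContinuousOn.intervalIntegrable
    apply ContinuousOn.rpow_const
    · apply hcont.mono
      rw [Set.uIcc_of_le hab]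
      intro t ht
      have := ht.1
      exact Set.mem_Ioi.mpr (by linarith)
    · intro t ht; right; exact hp0
  -- the uniform bound on the integral
  set K : ℝ := c₀ ^ p * (x₁ - x₀) + (2 * r₀) ^ p * (x₁ ^ (1 - p) / (p - 1)) with hK_def
  have hIbound : ∀ x, x₁ ≤ x → (∫ t in x₀..x, f' t ^ p) ≤ K := by
    intro x hx
    have h1 : (∫ t in x₀..x₁, f' t ^ p) + (∫ t in x₁..x, f' t ^ p)
        = ∫ t in x₀..x, f' t ^ p := by
      exact intervalIntegral.integral_add_adjacent_intervals
        (hinteg x₀ x₁ le_rfl hx₁gt.le) (hinteg x₁ x hx₁gt.le hx)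
    rw [← h1]
    have hI1 : (∫ t in x₀..x₁, f' t ^ p) ≤ c₀ ^ p * (x₁ - x₀) := by
      have := intervalIntegral.integral_mono_on hx₁gt.le (hinteg x₀ x₁ le_rfl hx₁gt.le)
        (intervalIntegrable_const (c := c₀ ^ p))
        (fun t ht => Real.rpow_le_rpow (hpos t (by
          have := ht.1; exact Set.mem_Ioi.mpr (by linarith))).le (hf'le t ht.1) hp0)
      simpa [mul_comm] using this
    have hI2 : (∫ t in x₁..x, f' t ^ p) ≤ (2 * r₀) ^ p * (x₁ ^ (1 - p) / (p - 1)) := by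
      have hmono : (∫ t in x₁..x, f' t ^ p) ≤ ∫ t in x₁..x, (2 * r₀) ^ p * t ^ (-p) := by
        apply intervalIntegral.integral_mono_on hx (hinteg x₁ x hx₁gt.le hx)
        · apply ContinuousOn.intervalIntegrable
          apply ContinuousOn.mul continuousOn_const
          apply ContinuousOn.rpow_const continuousOn_id
          intro t ht
          rw [Set.uIcc_of_le hx] at ht
          left; exact ne_of_gt (show (0:ℝ) < t by linarith [ht.1])
        · intro t ht
          have htpos : 0 < t := by linarith [ht.1]
          have h1 : f' t ≤ 2 * r₀ / t := hf'le2 t ht.1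
          have h2 : (2 * r₀ / t) ^ p = (2 * r₀) ^ p * t ^ (-p) := by
            rw [Real.div_rpow (by positivity) htpos.le, Real.rpow_neg htpos.le,
              div_eq_mul_inv]
          calc f' t ^ p ≤ (2 * r₀ / t) ^ p :=
                Real.rpow_le_rpow (hpos t (Set.mem_Ioi.mpr (by linarith [ht.1]))).le h1 hp0
            _ = (2 * r₀) ^ p * t ^ (-p) := h2
      have hval : (∫ t in x₁..x, (2 * r₀) ^ p * t ^ (-p))
          = (2 * r₀) ^ p * ((x ^ (-p + 1) - x₁ ^ (-p + 1)) / (-p + 1)) := by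
        rw [intervalIntegral.integral_const_mul, integral_rpow]
        right
        constructor
        · intro h; linarith
        · rw [Set.uIcc_of_le hx]
          intro h
          linarith [h.1]
      have hxpos : 0 < x := by linarith
      have hle : (x ^ (-p + 1) - x₁ ^ (-p + 1)) / (-p + 1) ≤ x₁ ^ (1 - p) / (p - 1) := by
        have h1 : (x ^ (-p + 1) - x₁ ^ (-p + 1)) / (-p + 1)
            = (x₁ ^ (-p + 1) - x ^ (-p + 1)) / (p - 1) := by
          rw [div_eq_div_iff (by linarith) (by linarith)]; ring
        rw [h1, show (1 : ℝ) - p = -p + 1 by ring]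
        apply div_le_div_of_nonneg_right _ (by linarith)
        have : (0:ℝ) ≤ x ^ (-p + 1) := Real.rpow_nonneg hxpos.le _
        linarith
      calc (∫ t in x₁..x, f' t ^ p) ≤ _ := hmono
        _ = _ := hval
        _ ≤ (2 * r₀) ^ p * (x₁ ^ (1 - p) / (p - 1)) := by
            apply mul_le_mul_of_nonneg_left hle (by positivity)
    rw [hK_def]
    linarith
  -- assemble
  refine ⟨x₁, hx₁gt, A * Real.exp (-K), B * Real.sqrt (1 + c₀ ^ 2), by positivity, ?_⟩
  intro x hx
  have hxx₀ : x₀ < x := lt_trans hx₁gt hx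
  have hxr : r₀ < x := lt_trans hx₀ hxx₀
  have hf'pos : 0 < f' x := hpos x hxr
  have hsq : (1:ℝ) ≤ Real.sqrt (1 + f' x ^ 2) := by
    have h := Real.sqrt_le_sqrt (show (1:ℝ) ≤ 1 + f' x ^ 2 by nlinarith)
    simpa using h
  have hsqpos : 0 < Real.sqrt (1 + f' x ^ 2) := by linarith
  obtain ⟨hlo, hhi⟩ := hbd x hxx₀
  constructor
  · -- lower bound
    have hK : (∫ t in x₀..x, f' t ^ p) ≤ K := hIbound x hx.le
    have hexp : Real.exp (-K) ≤ Real.exp (-∫ t in x₀..x, f' t ^ p) :=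
      Real.exp_le_exp.mpr (by linarith)
    have h1 : A * Real.exp (-K) ≤ x * f' x / Real.sqrt (1 + f' x ^ 2) := by
      calc A * Real.exp (-K) ≤ A * Real.exp (-∫ t in x₀..x, f' t ^ p) :=
            mul_le_mul_of_nonneg_left hexp hA.le
        _ ≤ _ := hlo
    have h2 : x * f' x / Real.sqrt (1 + f' x ^ 2) ≤ x * f' x := by
      apply div_le_self (mul_nonneg (by linarith) hf'pos.le) hsq
    linarith
  · -- upper bound
    have hfle : f' x ≤ c₀ := hf'le x hxx₀.le
    have hsqle : Real.sqrt (1 + f' x ^ 2) ≤ Real.sqrt (1 + c₀ ^ 2) := by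
      apply Real.sqrt_le_sqrt; nlinarith
    have h1 : x * f' x = (x * f' x / Real.sqrt (1 + f' x ^ 2)) * Real.sqrt (1 + f' x ^ 2) := by
      field_simp
    rw [h1]
    calc (x * f' x / Real.sqrt (1 + f' x ^ 2)) * Real.sqrt (1 + f' x ^ 2)
        ≤ B * Real.sqrt (1 + f' x ^ 2) := mul_le_mul_of_nonneg_right hhi hsqpos.le
      _ ≤ B * Real.sqrt (1 + c₀ ^ 2) := mul_le_mul_of_nonneg_left hsqle hB.le
end
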